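/- arXiv:2308.15414 — 6 statements merged into one kernel-verified Lean document; each statement's English description precedes it below -/
import Mathlib

section
/- Let X be a Banach space, F a Banach lattice, and let (T_n) be a sequence of Dunford–Pettis L-weakly compact operators from X to F converging in operator norm to a bounded operator T : X → F. Then T is Dunford–Pettis L-weakly compact. -/
open Filter Topology

/-- A sequence of functionals converges to zero uniformly on a set `A`. -/
def UnifNullOn {X : Type*} [NormedAddCommGroup X] [NormedSpace ℝ X]
    (f : ℕ → X →L[ℝ] ℝ) (A : Set X) : Prop :=
  ∀ ε > (0 : ℝ), ∃ N : ℕ, ∀ n ≥ N, ∀ a ∈ A, |f n a| ≤ ε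

/-- A norm bounded set `A` is a Dunford–Pettis set: every weakly null sequence in the dual
converges to zero uniformly on `A`. -/
def IsDPSet {X : Type*} [NormedAddCommGroup X] [NormedSpace ℝ X] (A : Set X) : Prop :=
  Bornology.IsBounded A ∧
    ∀ f : ℕ → X →L[ℝ] ℝ,
      (∀ g : (X →L[ℝ] ℝ) →L[ℝ] ℝ, Tendsto (fun n => g (f n)) atTop (𝓝 0)) →
        UnifNullOn f A

/-- The solid hull of a set in a Banach lattice. -/
def solHull {F : Type*} [NormedAddCommGroup F] [Lattice F] [HasSolidNorm F] [IsOrderedAddMonoid F] (A : Set F) : Set F :=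
  {x | ∃ a ∈ A, |x| ≤ |a|}

/-- A subset of a Banach lattice is L-weakly compact (Lwc) if it is norm bounded and every
disjoint sequence in its solid hull is norm null. -/
def IsLwcSet {F : Type*} [NormedAddCommGroup F] [Lattice F] [HasSolidNorm F] [IsOrderedAddMonoid F] (A : Set F) : Prop :=
  Bornology.IsBounded A ∧
    ∀ x : ℕ → F, (∀ n, x n ∈ solHull A) →
      (∀ n m, n ≠ m → |x n| ⊓ |x m| = 0) →
        Tendsto (fun n => ‖x n‖) atTop (𝓝 0)

/-- An operator is Dunford–Pettis L-weakly compact if it carries DP sets onto Lwc sets. -/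
def IsDPLwcOp {X : Type*} [NormedAddCommGroup X] [NormedSpace ℝ X]
    {F : Type*} [NormedAddCommGroup F] [Lattice F] [HasSolidNorm F] [IsOrderedAddMonoid F] [NormedSpace ℝ F] (T : X →L[ℝ] F) : Prop :=
  ∀ A : Set X, IsDPSet A → IsLwcSet (T '' A)

/-! A set that can be approximated arbitrarily well in norm by Lwc sets is Lwc, and for a bounded set
`A` the sets `Tₖ(A)` approximate `T(A)` uniformly. To see the first claim, let `|x| ≤ |a|` and
`‖a - b‖ < ε`; then `|x| ≤ y + |a - b|` with `y := (|x| - |a - b|)⁺`, and `y` lies below both `|b|`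
and `|x|`. So a disjoint sequence `xₙ` in the solid hull of `A` yields a disjoint sequence `yₙ` in
the solid hull of the approximating Lwc set, which is norm null, while `‖xₙ‖ - ‖yₙ‖ < ε`. -/

section Lattice

variable {F : Type*} [Lattice F] [AddCommGroup F] [IsOrderedAddMonoid F]

lemma posPart_abs_sub_abs_sub_le_abs {x a b : F} (hxa : |x| ≤ |a|) : (|x| - |a - b|)⁺ ≤ |b| := by
  have hab : |a| ≤ |b| + |a - b| := by simpa using abs_add_le b (a - b)
  exact sup_le (sub_le_iff_le_add.2 (hxa.trans hab)) (abs_nonneg b)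

lemma posPart_abs_sub_abs_le_abs (x c : F) : (|x| - |c|)⁺ ≤ |x| :=
  sup_le (sub_le_self _ (abs_nonneg c)) (abs_nonneg x)

lemma abs_le_posPart_abs_sub_add_abs (x c : F) : |x| ≤ (|x| - |c|)⁺ + |c| :=
  sub_le_iff_le_add.1 (le_posPart _)

lemma abs_inf_abs_eq_zero_of_abs_le {u v x y : F} (hux : |u| ≤ |x|) (hvy : |v| ≤ |y|)
    (hxy : |x| ⊓ |y| = 0) : |u| ⊓ |v| = 0 :=
  le_antisymm (hxy ▸ inf_le_inf hux hvy) (le_inf (abs_nonneg u) (abs_nonneg v))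

end Lattice

section BanachLattice

variable {F : Type*} [NormedAddCommGroup F] [Lattice F] [HasSolidNorm F] [IsOrderedAddMonoid F]

lemma norm_le_norm_posPart_abs_sub_add (x c : F) : ‖x‖ ≤ ‖(|x| - |c|)⁺‖ + ‖c‖ := by
  have hsum : |x| ≤ |((|x| - |c|)⁺ + |c|)| := by
    rw [abs_of_nonneg (add_nonneg (posPart_nonneg _) (abs_nonneg c))]
    exact abs_le_posPart_abs_sub_add_abs x c
  calc ‖x‖ ≤ ‖(|x| - |c|)⁺ + |c|‖ := norm_le_norm_of_abs_le_abs hsum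
    _ ≤ ‖(|x| - |c|)⁺‖ + ‖c‖ := by simpa only [norm_abs_eq_norm] using norm_add_le _ |c|

lemma IsLwcSet.of_forall_exists_norm_sub_lt {A : Set F}
    (happrox : ∀ ε > 0, ∃ B, IsLwcSet B ∧ ∀ a ∈ A, ∃ b ∈ B, ‖a - b‖ < ε) : IsLwcSet A := by
  refine ⟨?_, fun x hx hdisj => Metric.tendsto_atTop.2 fun ε hε => ?_⟩
  · obtain ⟨B, hB, hAB⟩ := happrox 1 one_pos
    refine (hB.1.thickening (δ := 1)).subset fun a ha => ?_
    obtain ⟨b, hb, hab⟩ := hAB a ha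
    exact Metric.mem_thickening_iff.2 ⟨b, hb, by rwa [dist_eq_norm]⟩
  obtain ⟨B, hB, hAB⟩ := happrox (ε / 2) (half_pos hε)
  choose a ha hxa using hx
  choose b hb hab using fun n => hAB (a n) (ha n)
  set y : ℕ → F := fun n => (|x n| - |a n - b n|)⁺
  have hy_sol : ∀ n, y n ∈ solHull B := fun n =>
    ⟨b n, hb n, (abs_of_nonneg (posPart_nonneg _)).trans_le
      (posPart_abs_sub_abs_sub_le_abs (hxa n))⟩
  have hy_le : ∀ n, |y n| ≤ |x n| := fun n =>
    (abs_of_nonneg (posPart_nonneg _)).trans_le (posPart_abs_sub_abs_le_abs _ _)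
  have hy_disj : ∀ n m, n ≠ m → |y n| ⊓ |y m| = 0 := fun n m hnm =>
    abs_inf_abs_eq_zero_of_abs_le (hy_le n) (hy_le m) (hdisj n m hnm)
  obtain ⟨N, hN⟩ := Metric.tendsto_atTop.1 (hB.2 y hy_sol hy_disj) (ε / 2) (half_pos hε)
  refine ⟨N, fun n hn => ?_⟩
  have hyn : ‖y n‖ < ε / 2 := by simpa using hN n hn
  rw [Real.dist_eq, sub_zero, abs_norm]
  calc ‖x n‖ ≤ ‖y n‖ + ‖a n - b n‖ := norm_le_norm_posPart_abs_sub_add _ _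
    _ < ε / 2 + ε / 2 := add_lt_add hyn (hab n)
    _ = ε := add_halves ε

end BanachLattice

lemma IsLwcSet.image_of_tendsto_norm_sub {X : Type*} [NormedAddCommGroup X] [NormedSpace ℝ X]
    {F : Type*} [NormedAddCommGroup F] [Lattice F] [HasSolidNorm F] [IsOrderedAddMonoid F]
    [NormedSpace ℝ F] {A : Set X} (hA : Bornology.IsBounded A) {Tn : ℕ → X →L[ℝ] F}
    {T : X →L[ℝ] F} (hTn : ∀ n, IsLwcSet (Tn n '' A))
    (hlim : Tendsto (fun n => ‖Tn n - T‖) atTop (𝓝 0)) : IsLwcSet (T '' A) := by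
  refine IsLwcSet.of_forall_exists_norm_sub_lt fun ε hε => ?_
  obtain ⟨R, -, hAR⟩ := hA.exists_pos_norm_le
  have hlimR : Tendsto (fun n => ‖Tn n - T‖ * R) atTop (𝓝 0) := by
    simpa using hlim.mul_const R
  obtain ⟨k, hk⟩ := (hlimR.eventually (gt_mem_nhds hε)).exists
  refine ⟨Tn k '' A, hTn k, ?_⟩
  rintro _ ⟨a, ha, rfl⟩
  refine ⟨Tn k a, Set.mem_image_of_mem _ ha, ?_⟩
  calc ‖T a - Tn k a‖ = ‖(Tn k - T) a‖ := by rw [norm_sub_rev, sub_apply]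
    _ ≤ ‖Tn k - T‖ * ‖a‖ := (Tn k - T).le_opNorm a
    _ ≤ ‖Tn k - T‖ * R := by gcongr; exact hAR a ha
    _ < ε := hk

theorem dpLwc_closed_general
    {X : Type*} [NormedAddCommGroup X] [NormedSpace ℝ X]
    {F : Type*} [NormedAddCommGroup F] [Lattice F] [HasSolidNorm F] [IsOrderedAddMonoid F] [NormedSpace ℝ F]
    (Tn : ℕ → X →L[ℝ] F) (T : X →L[ℝ] F)
    (hTn : ∀ n, IsDPLwcOp (Tn n))
    (hlim : Tendsto (fun n => ‖Tn n - T‖) atTop (𝓝 0)) :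
    IsDPLwcOp T :=
  fun A hA => IsLwcSet.image_of_tendsto_norm_sub hA.1 (fun n => hTn n A hA) hlim

/-- The operator norm limit of a sequence of Dunford–Pettis L-weakly compact operators is
Dunford–Pettis L-weakly compact. -/
theorem dpLwc_closed
    {X : Type*} [NormedAddCommGroup X] [NormedSpace ℝ X] [CompleteSpace X]
    {F : Type*} [NormedAddCommGroup F] [Lattice F] [HasSolidNorm F] [IsOrderedAddMonoid F] [NormedSpace ℝ F] [CompleteSpace F]
    (Tn : ℕ → X →L[ℝ] F) (T : X →L[ℝ] F)
    (hTn : ∀ n, IsDPLwcOp (Tn n))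
    (hlim : Tendsto (fun n => ‖Tn n - T‖) atTop (𝓝 0)) :
    IsDPLwcOp T :=
  dpLwc_closed_general Tn T hTn hlim
end

section
/- Let X be a Banach space, F a Banach lattice, and let (T_n) be a sequence of limitedly L-weakly compact operators from X to F converging in operator norm to a bounded operator T : X → F. Then T is limitedly L-weakly compact. -/
open Filter Topology

/-- A norm bounded set `A` is limited: every weak*-null sequence in the dual converges
to zero uniformly on `A`. -/
def IsLimitedSet {X : Type*} [NormedAddCommGroup X] [NormedSpace ℝ X] (A : Set X) : Prop :=
  Bornology.IsBounded A ∧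
    ∀ f : ℕ → X →L[ℝ] ℝ,
      (∀ x : X, Tendsto (fun n => f n x) atTop (𝓝 0)) →
        UnifNullOn f A

/-- An operator is limitedly L-weakly compact if it carries limited sets onto Lwc sets. -/
def IsLLwcOp {X : Type*} [NormedAddCommGroup X] [NormedSpace ℝ X]
    {F : Type*} [NormedAddCommGroup F] [Lattice F] [HasSolidNorm F] [IsOrderedAddMonoid F] [NormedSpace ℝ F] (T : X →L[ℝ] F) : Prop :=
  ∀ A : Set X, IsLimitedSet A → IsLwcSet (T '' A)

/-!
An operator `ε`-close in norm to an l-Lwc operator `S` maps a limited (hence bounded) set `A`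
into a small neighbourhood of the Lwc set `S(A)`. And a set `A` lying within `ε` of an Lwc set `B`
is nearly Lwc: for a disjoint sequence `x` in `sol(A)` with `|x| ≤ |a| ≤ |b| + |a - b|`, write
`|x| = (|x| - |x| ⊓ |a - b|) + |x| ⊓ |a - b|`; the first part is a disjoint sequence in `sol(B)`,
hence norm null, and the second has norm below `ε`.
-/

section Lattice

variable {α : Type*} [Lattice α] [AddCommGroup α] [IsOrderedAddMonoid α]

theorem sub_inf_le_of_le_add {x y c : α} (hy : 0 ≤ y) (h : x ≤ y + c) : x - x ⊓ c ≤ y := by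
  rw [sub_inf, sub_self]
  exact sup_le hy (sub_le_iff_le_add.2 h)

theorem abs_le_abs_add_abs_sub (a b : α) : |a| ≤ |b| + |a - b| := by
  simpa using abs_add_le b (a - b)

theorem abs_inf_abs_eq_zero_of_abs_le_abs {a b x y : α} (ha : |a| ≤ |x|) (hb : |b| ≤ |y|)
    (h : |x| ⊓ |y| = 0) : |a| ⊓ |b| = 0 :=
  le_antisymm ((inf_le_inf ha hb).trans h.le) (le_inf (abs_nonneg _) (abs_nonneg _))

end Lattice

theorem IsLwcSet.of_forall_subset_thickening {F : Type*} [NormedAddCommGroup F] [Lattice F]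
    [HasSolidNorm F] [IsOrderedAddMonoid F] {A : Set F}
    (h : ∀ ε > 0, ∃ B, IsLwcSet B ∧ A ⊆ Metric.thickening ε B) : IsLwcSet A := by
  refine ⟨?_, fun x hx hdisj => ?_⟩
  · obtain ⟨B, hB, hAB⟩ := h 1 one_pos
    exact hB.1.thickening.subset hAB
  choose a ha hxa using hx
  rw [← tendsto_zero_iff_norm_tendsto_zero, NormedAddGroup.tendsto_nhds_zero]
  intro ε hε
  obtain ⟨B, hB, hAB⟩ := h (ε / 2) (half_pos hε)
  choose b hb hab using fun n => Metric.mem_thickening_iff.1 (hAB (ha n))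
  set e := fun n => |x n| ⊓ |a n - b n|
  set z := fun n => |x n| - e n
  have he_nonneg n : 0 ≤ e n := le_inf (abs_nonneg _) (abs_nonneg _)
  have hz_nonneg n : 0 ≤ z n := sub_nonneg.2 inf_le_left
  have hz_le_x n : |z n| ≤ |x n| := by
    rw [abs_of_nonneg (hz_nonneg n)]
    exact sub_le_self _ (he_nonneg n)
  have hz_le_b n : |z n| ≤ |b n| := by
    rw [abs_of_nonneg (hz_nonneg n)]
    exact sub_inf_le_of_le_add (abs_nonneg _) ((hxa n).trans (abs_le_abs_add_abs_sub _ _))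
  have hz_null := hB.2 z (fun n => ⟨b n, hb n, hz_le_b n⟩) fun n m hnm =>
    abs_inf_abs_eq_zero_of_abs_le_abs (hz_le_x n) (hz_le_x m) (hdisj n m hnm)
  filter_upwards [NormedAddGroup.tendsto_nhds_zero.1
    (tendsto_zero_iff_norm_tendsto_zero.2 hz_null) (ε / 2) (half_pos hε)] with n hn
  have he : ‖e n‖ ≤ dist (a n) (b n) := by
    rw [dist_eq_norm]
    refine norm_le_norm_of_abs_le_abs ?_
    rw [abs_of_nonneg (he_nonneg n)]
    exact inf_le_right
  calc ‖x n‖ = ‖z n + e n‖ := by simp [z, norm_abs_eq_norm]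
    _ ≤ ‖z n‖ + ‖e n‖ := norm_add_le _ _
    _ < ε / 2 + ε / 2 := add_lt_add_of_lt_of_le hn (he.trans (hab n).le)
    _ = ε := add_halves ε

theorem isClosed_setOf_isLLwcOp {X : Type*} [NormedAddCommGroup X] [NormedSpace ℝ X]
    {F : Type*} [NormedAddCommGroup F] [Lattice F] [HasSolidNorm F] [IsOrderedAddMonoid F]
    [NormedSpace ℝ F] : IsClosed {T : X →L[ℝ] F | IsLLwcOp T} := by
  refine closure_subset_iff_isClosed.1 fun T hT A hA => ?_
  obtain ⟨R, hR, hAR⟩ := hA.1.exists_pos_norm_le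
  refine IsLwcSet.of_forall_subset_thickening fun ε hε => ?_
  obtain ⟨S, hS, hTS⟩ := Metric.mem_closure_iff.1 hT (ε / R) (div_pos hε hR)
  refine ⟨S '' A, hS A hA, ?_⟩
  rintro _ ⟨a, ha, rfl⟩
  refine Metric.mem_thickening_iff.2 ⟨S a, Set.mem_image_of_mem S ha, ?_⟩
  calc dist (T a) (S a) = ‖(T - S) a‖ := by rw [dist_eq_norm, sub_apply]
    _ ≤ ‖T - S‖ * R := (T - S).le_of_opNorm_le_of_le le_rfl (hAR a ha)
    _ < ε / R * R := by rw [← dist_eq_norm]; exact mul_lt_mul_of_pos_right hTS hR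
    _ = ε := div_mul_cancel₀ ε hR.ne'

theorem lLwc_closed_general
    {X : Type*} [NormedAddCommGroup X] [NormedSpace ℝ X]
    {F : Type*} [NormedAddCommGroup F] [Lattice F] [HasSolidNorm F] [IsOrderedAddMonoid F] [NormedSpace ℝ F]
    (Tn : ℕ → X →L[ℝ] F) (T : X →L[ℝ] F)
    (hTn : ∀ n, IsLLwcOp (Tn n))
    (hlim : Tendsto (fun n => ‖Tn n - T‖) atTop (𝓝 0)) :
    IsLLwcOp T :=
  isClosed_setOf_isLLwcOp.mem_of_tendsto (tendsto_iff_norm_sub_tendsto_zero.2 hlim)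
    (Eventually.of_forall hTn)

/-- The operator norm limit of a sequence of limitedly L-weakly compact operators is
limitedly L-weakly compact. -/
theorem lLwc_closed
    {X : Type*} [NormedAddCommGroup X] [NormedSpace ℝ X] [CompleteSpace X]
    {F : Type*} [NormedAddCommGroup F] [Lattice F] [HasSolidNorm F] [IsOrderedAddMonoid F] [NormedSpace ℝ F] [CompleteSpace F]
    (Tn : ℕ → X →L[ℝ] F) (T : X →L[ℝ] F)
    (hTn : ∀ n, IsLLwcOp (Tn n))
    (hlim : Tendsto (fun n => ‖Tn n - T‖) atTop (𝓝 0)) :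
    IsLLwcOp T :=
  lLwc_closed_general Tn T hTn hlim
end

section
/- Let E be a Banach lattice, Y a Banach space, and let (T_n) be a sequence of limitedly M-weakly compact operators from E to Y converging in operator norm to a bounded operator T : E → Y. Then T is limitedly M-weakly compact. -/
open Filter Topology

/-! Convergence in operator norm is uniform convergence on bounded sets, and a uniform limit of
sequences tending to `0` tends to `0`. Hence, for a fixed bounded sequence `x` and functional `g`,
the operators `T` with `g (T xₙ) → 0` form a closed set, and the l-Mwc operators are an
intersection of such sets. -/

/-- An operator `T` from a Banach lattice `E` to a Banach space `Y` is limitedly M-weakly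
compact if `(T xₙ)` is weakly null for every disjoint norm bounded sequence `(xₙ)` in `E`. -/
def IsLMwcOp {E : Type*} [NormedAddCommGroup E] [Lattice E] [HasSolidNorm E] [IsOrderedAddMonoid E] [NormedSpace ℝ E]
    {Y : Type*} [NormedAddCommGroup Y] [NormedSpace ℝ Y] (T : E →L[ℝ] Y) : Prop :=
  ∀ x : ℕ → E, Bornology.IsBounded (Set.range x) →
    (∀ n m, n ≠ m → |x n| ⊓ |x m| = 0) →
      ∀ g : Y →L[ℝ] ℝ, Tendsto (fun n => g (T (x n))) atTop (𝓝 0)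

namespace ContinuousLinearMap

variable {𝕜 E F : Type*} [NontriviallyNormedField 𝕜] [SeminormedAddCommGroup E]
  [NormedSpace 𝕜 E] [SeminormedAddCommGroup F] [NormedSpace 𝕜 F]

theorem tendstoUniformlyOn_of_tendsto {ι : Type*} {l : Filter ι} {T : ι → E →L[𝕜] F}
    {T₀ : E →L[𝕜] F} (hT : Tendsto T l (𝓝 T₀)) {s : Set E} (hs : Bornology.IsBounded s) :
    TendstoUniformlyOn (fun i x => T i x) T₀ l s :=
  -- the norm topology on `E →L[𝕜] F` is by construction that of uniform convergence on bounded sets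
  (UniformConvergenceCLM.tendsto_iff_tendstoUniformlyOn (σ := RingHom.id 𝕜) (F := F)
    (𝔖 := {S | Bornology.IsVonNBounded 𝕜 S})).mp hT s ((NormedSpace.isVonNBounded_iff 𝕜).mpr hs)

theorem isClosed_setOf_tendsto_apply {α : Type*} {p : Filter α} {x : α → E}
    (hx : Bornology.IsBounded (Set.range x)) (y : F) :
    IsClosed {T : E →L[𝕜] F | Tendsto (fun a => T (x a)) p (𝓝 y)} := by
  set S := {T : E →L[𝕜] F | Tendsto (fun a => T (x a)) p (𝓝 y)}
  refine isClosed_of_closure_subset fun T₀ hT₀ => ?_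
  have : (𝓝[S] T₀).NeBot := mem_closure_iff_nhdsWithin_neBot.mp hT₀
  have huniform : TendstoUniformly (fun (T : E →L[𝕜] F) a => T (x a)) (fun a => T₀ (x a))
      (𝓝[S] T₀) := by
    have := (tendstoUniformlyOn_of_tendsto
      (tendsto_id.mono_left (nhdsWithin_le_nhds (s := S) (a := T₀))) hx).comp x
    rwa [Set.preimage_range, tendstoUniformlyOn_univ] at this
  exact huniform.tendsto_of_eventually_tendsto self_mem_nhdsWithin tendsto_const_nhds

end ContinuousLinearMap

theorem isClosed_setOf_isLMwcOp {E : Type*} [NormedAddCommGroup E] [Lattice E] [HasSolidNorm E]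
    [IsOrderedAddMonoid E] [NormedSpace ℝ E] {Y : Type*} [NormedAddCommGroup Y] [NormedSpace ℝ Y] :
    IsClosed {T : E →L[ℝ] Y | IsLMwcOp T} := by
  simp only [IsLMwcOp, Set.ofPred_forall]
  refine isClosed_iInter fun x => isClosed_iInter fun hx => isClosed_iInter fun _ =>
    isClosed_iInter fun g => ?_
  exact (ContinuousLinearMap.isClosed_setOf_tendsto_apply hx 0).preimage
    (ContinuousLinearMap.compL ℝ E Y ℝ g).continuous

theorem lMwc_closed_general
    {E : Type*} [NormedAddCommGroup E] [Lattice E] [HasSolidNorm E] [IsOrderedAddMonoid E] [NormedSpace ℝ E]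
    {Y : Type*} [NormedAddCommGroup Y] [NormedSpace ℝ Y]
    (Tn : ℕ → E →L[ℝ] Y) (T : E →L[ℝ] Y)
    (hTn : ∀ n, IsLMwcOp (Tn n))
    (hlim : Tendsto (fun n => ‖Tn n - T‖) atTop (𝓝 0)) :
    IsLMwcOp T :=
  isClosed_setOf_isLMwcOp.mem_of_tendsto (tendsto_iff_norm_sub_tendsto_zero.mpr hlim)
    (Eventually.of_forall hTn)

/-- The operator norm limit of a sequence of limitedly M-weakly compact operators is
limitedly M-weakly compact. -/
theorem lMwc_closed
    {E : Type*} [NormedAddCommGroup E] [Lattice E] [HasSolidNorm E] [IsOrderedAddMonoid E] [NormedSpace ℝ E] [CompleteSpace E]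
    {Y : Type*} [NormedAddCommGroup Y] [NormedSpace ℝ Y] [CompleteSpace Y]
    (Tn : ℕ → E →L[ℝ] Y) (T : E →L[ℝ] Y)
    (hTn : ∀ n, IsLMwcOp (Tn n))
    (hlim : Tendsto (fun n => ‖Tn n - T‖) atTop (𝓝 0)) :
    IsLMwcOp T :=
  lMwc_closed_general Tn T hTn hlim
end

section
/- Let E and F be Banach lattices and let P be a nonempty set of bounded linear operators from E to F such that S + T ∈ P and S − T ∈ P whenever S, T ∈ P, and such that P has the domination property (if 0 ≤ S ≤ T and T ∈ P then S ∈ P). Let T : E → F be a bounded operator whose modulus |T| exists in the ordered space of bounded operators (i.e. |T| is the least upper bound of T and −T with respect to the operator order). Then T is an r-P-operator if and only if |T| ∈ P. -/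
/-- A bounded operator between Banach lattices is positive if it maps positive elements to
positive elements. -/
def IsPosOp {E F : Type*} [NormedAddCommGroup E] [Lattice E] [HasSolidNorm E] [IsOrderedAddMonoid E] [NormedSpace ℝ E]
    [NormedAddCommGroup F] [Lattice F] [HasSolidNorm F] [IsOrderedAddMonoid F] [NormedSpace ℝ F] (T : E →L[ℝ] F) : Prop :=
  ∀ x : E, 0 ≤ x → 0 ≤ T x

/-- The operator order: `S ≤ T` iff `T - S` is a positive operator. -/
def OpLE {E F : Type*} [NormedAddCommGroup E] [Lattice E] [HasSolidNorm E] [IsOrderedAddMonoid E] [NormedSpace ℝ E]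
    [NormedAddCommGroup F] [Lattice F] [HasSolidNorm F] [IsOrderedAddMonoid F] [NormedSpace ℝ F] (S T : E →L[ℝ] F) : Prop :=
  IsPosOp (T - S)

/-- `M` is the modulus of `T`: the least operator `U` satisfying `±T ≤ U`. -/
def IsModulusOf {E F : Type*} [NormedAddCommGroup E] [Lattice E] [HasSolidNorm E] [IsOrderedAddMonoid E] [NormedSpace ℝ E]
    [NormedAddCommGroup F] [Lattice F] [HasSolidNorm F] [IsOrderedAddMonoid F] [NormedSpace ℝ F] (M T : E →L[ℝ] F) : Prop :=
  OpLE T M ∧ OpLE (-T) M ∧ ∀ V : E →L[ℝ] F, OpLE T V → OpLE (-T) V → OpLE M V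

/-- `T` is an r-`P`-operator if `T = T₁ - T₂` with `T₁, T₂` positive operators in `P`. -/
def IsRPOp {E F : Type*} [NormedAddCommGroup E] [Lattice E] [HasSolidNorm E] [IsOrderedAddMonoid E] [NormedSpace ℝ E]
    [NormedAddCommGroup F] [Lattice F] [HasSolidNorm F] [IsOrderedAddMonoid F] [NormedSpace ℝ F]
    (P : Set (E →L[ℝ] F)) (T : E →L[ℝ] F) : Prop :=
  ∃ T₁ T₂ : E →L[ℝ] F, T₁ ∈ P ∧ T₂ ∈ P ∧ IsPosOp T₁ ∧ IsPosOp T₂ ∧ T = T₁ - T₂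

/-! If `T = T₁ - T₂` with `T₁, T₂ ≥ 0` in `P`, then `±T ≤ T₁ + T₂ ∈ P`, so `0 ≤ |T| ≤ T₁ + T₂`
and domination puts `|T|` in `P`. Conversely `T = (|T| + T) - |T|`, where
`0 ≤ |T| + T ≤ 2|T| ∈ P`. -/

section OperatorOrder

variable {E F : Type*} [NormedAddCommGroup E] [Lattice E] [HasSolidNorm E] [IsOrderedAddMonoid E]
  [NormedSpace ℝ E] [NormedAddCommGroup F] [Lattice F] [HasSolidNorm F] [IsOrderedAddMonoid F]
  [NormedSpace ℝ F]

theorem opLE_iff {S T : E →L[ℝ] F} : OpLE S T ↔ ∀ x, 0 ≤ x → S x ≤ T x := by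
  simp only [OpLE, IsPosOp, sub_apply, sub_nonneg]

theorem isPosOp_add_iff_opLE_neg {S T : E →L[ℝ] F} : IsPosOp (S + T) ↔ OpLE (-T) S := by
  simp only [OpLE, sub_neg_eq_add]

theorem opLE_sub_add {T₁ T₂ : E →L[ℝ] F} (h₂ : IsPosOp T₂) : OpLE (T₁ - T₂) (T₁ + T₂) :=
  opLE_iff.2 fun x hx => by
    have h := h₂ x hx
    simpa only [sub_apply, add_apply] using (sub_le_self _ h).trans (le_add_of_nonneg_right h)

theorem opLE_neg_sub_add {T₁ T₂ : E →L[ℝ] F} (h₁ : IsPosOp T₁) : OpLE (-(T₁ - T₂)) (T₁ + T₂) :=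
  opLE_iff.2 fun x hx => by
    have h := h₁ x hx
    simpa only [neg_apply, sub_apply, add_apply, neg_sub] using
      (sub_le_self _ h).trans (le_add_of_nonneg_left h)

namespace IsModulusOf

variable {M T : E →L[ℝ] F}

theorem abs_apply_le (hM : IsModulusOf M T) {x : E} (hx : 0 ≤ x) : |T x| ≤ M x :=
  abs_le'.2 ⟨opLE_iff.1 hM.1 x hx, opLE_iff.1 hM.2.1 x hx⟩

theorem isPosOp (hM : IsModulusOf M T) : IsPosOp M :=
  fun _ hx => (abs_nonneg _).trans (hM.abs_apply_le hx)

theorem isPosOp_add (hM : IsModulusOf M T) : IsPosOp (M + T) :=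
  isPosOp_add_iff_opLE_neg.2 hM.2.1

theorem add_opLE_add_self (hM : IsModulusOf M T) : OpLE (M + T) (M + M) :=
  opLE_iff.2 fun x hx => by
    simpa using add_le_add_left (opLE_iff.1 hM.1 x hx) (M x)

theorem opLE_add_of_eq_sub (hM : IsModulusOf M T) {T₁ T₂ : E →L[ℝ] F} (h₁ : IsPosOp T₁)
    (h₂ : IsPosOp T₂) (hT : T = T₁ - T₂) : OpLE M (T₁ + T₂) := by
  subst hT
  exact hM.2.2 _ (opLE_sub_add h₂) (opLE_neg_sub_add h₁)

end IsModulusOf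

end OperatorOrder

theorem rP_iff_modulus_mem_general
    {E F : Type*} [NormedAddCommGroup E] [Lattice E] [HasSolidNorm E] [IsOrderedAddMonoid E] [NormedSpace ℝ E]
    [NormedAddCommGroup F] [Lattice F] [HasSolidNorm F] [IsOrderedAddMonoid F] [NormedSpace ℝ F]
    (P : Set (E →L[ℝ] F))
    (hadd : ∀ S ∈ P, ∀ T ∈ P, S + T ∈ P)
    (hdom : ∀ S T : E →L[ℝ] F, IsPosOp S → OpLE S T → T ∈ P → S ∈ P)
    (T M : E →L[ℝ] F) (hM : IsModulusOf M T) :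
    IsRPOp P T ↔ M ∈ P := by
  constructor
  · rintro ⟨T₁, T₂, hT₁P, hT₂P, hT₁, hT₂, hT⟩
    exact hdom M _ hM.isPosOp (hM.opLE_add_of_eq_sub hT₁ hT₂ hT) (hadd _ hT₁P _ hT₂P)
  · intro hMP
    have hMTP : M + T ∈ P := hdom _ _ hM.isPosOp_add hM.add_opLE_add_self (hadd _ hMP _ hMP)
    exact ⟨M + T, M, hMTP, hMP, hM.isPosOp_add, hM.isPosOp, by abel⟩

/-- If a nonempty set `P` of operators is closed under sums and differences and has the
domination property, and `T` has a modulus `|T|`, then `T` is an r-`P`-operator iff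
`|T| ∈ P`. -/
theorem rP_iff_modulus_mem
    {E F : Type*} [NormedAddCommGroup E] [Lattice E] [HasSolidNorm E] [IsOrderedAddMonoid E] [NormedSpace ℝ E] [CompleteSpace E]
    [NormedAddCommGroup F] [Lattice F] [HasSolidNorm F] [IsOrderedAddMonoid F] [NormedSpace ℝ F] [CompleteSpace F]
    (P : Set (E →L[ℝ] F)) (hne : P.Nonempty)
    (hadd : ∀ S ∈ P, ∀ T ∈ P, S + T ∈ P)
    (hsub : ∀ S ∈ P, ∀ T ∈ P, S - T ∈ P)
    (hdom : ∀ S T : E →L[ℝ] F, IsPosOp S → OpLE S T → T ∈ P → S ∈ P)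
    (T M : E →L[ℝ] F) (hM : IsModulusOf M T) :
    IsRPOp P T ↔ M ∈ P :=
  rP_iff_modulus_mem_general P hadd hdom T M hM
end

section
/- Let E and F be Banach lattices and let S, T : E → F be bounded linear operators with ±S ≤ T (i.e. S ≤ T and −S ≤ T in the operator order). If T is limitedly L-weakly compact, then S is limitedly L-weakly compact. -/
/-!
Let `xₙ` be disjoint with `|xₙ| ≤ |S aₙ|`, `aₙ ∈ A`. Splitting `|xₙ| ≤ (S aₙ)⁺ + (S aₙ)⁻` gives
`0 ≤ zₙ ≤ |xₙ|` below one of the two parts with `‖xₙ‖ ≤ 2‖zₙ‖`. Let `gₙ` norm `zₙ` and let `ψₙ` be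
the positive part of `gₙ` restricted to the ideal generated by `zₙ`. Then `|ψₙ (S aₙ)| ≥ ‖zₙ‖`,
while `|S e| ≤ T|e|` gives `|ψₙ (S e)| ≤ supₖ ‖T|e| ⊓ k zₙ‖`, which tends to zero because `{T|e|}`
is L-weakly compact (`{|e|}` being limited) and the `T|e| ⊓ kₙ zₙ` are disjoint. So `ψₙ ∘ S` is
weak*-null, hence tends to zero uniformly on the limited set `A`, and `‖xₙ‖ ≤ 2 |ψₙ (S aₙ)| → 0`.
-/

open Filter Topology

def idealIcc {G : Type*} [AddMonoid G] [Preorder G] (z w : G) : Set G :=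
  {v | 0 ≤ v ∧ v ≤ w ∧ ∃ k : ℕ, v ≤ k • z}

lemma zero_mem_idealIcc {G : Type*} [AddMonoid G] [Preorder G] {z w : G} (hw : 0 ≤ w) :
    (0 : G) ∈ idealIcc z w :=
  ⟨le_rfl, hw, 0, by simp⟩

section LatticeOrderedGroup

variable {G : Type*} [Lattice G] [AddCommGroup G] [IsOrderedAddMonoid G]

lemma inf_add_le_inf_add_inf {a b c : G} (ha : 0 ≤ a) (hb : 0 ≤ b) (hc : 0 ≤ c) :
    a ⊓ (b + c) ≤ a ⊓ b + a ⊓ c :=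
  calc a ⊓ (b + c) ≤ (a + a) ⊓ (a + c) ⊓ ((b + a) ⊓ (b + c)) :=
        le_inf (le_inf (inf_le_left.trans (le_add_of_nonneg_right ha))
            (inf_le_left.trans (le_add_of_nonneg_right hc)))
          (le_inf (inf_le_left.trans (le_add_of_nonneg_left hb)) inf_le_right)
    _ = a ⊓ b + a ⊓ c := by rw [inf_add, add_inf, add_inf, inf_inf_inf_comm]

lemma inf_nsmul_eq_zero {a b : G} (ha : 0 ≤ a) (hb : 0 ≤ b) (h : a ⊓ b = 0) (k : ℕ) :
    a ⊓ k • b = 0 := by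
  induction k with
  | zero => simpa using inf_eq_right.mpr ha
  | succ k ih =>
    refine le_antisymm ?_ (le_inf ha (nsmul_nonneg hb _))
    calc a ⊓ (k + 1) • b = a ⊓ (k • b + b) := by rw [succ_nsmul]
      _ ≤ a ⊓ k • b + a ⊓ b := inf_add_le_inf_add_inf ha (nsmul_nonneg hb k) hb
      _ = 0 := by rw [ih, h, add_zero]

lemma nsmul_inf_nsmul_eq_zero {a b : G} (ha : 0 ≤ a) (hb : 0 ≤ b) (h : a ⊓ b = 0) (j k : ℕ) :
    j • a ⊓ k • b = 0 := by
  have hk : k • b ⊓ a = 0 := by rw [inf_comm]; exact inf_nsmul_eq_zero ha hb h k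
  rw [inf_comm]
  exact inf_nsmul_eq_zero (nsmul_nonneg hb k) ha hk j

lemma sub_inf_le_of_le_add_s15 {v w₁ w₂ : G} (hw₂ : 0 ≤ w₂) (h : v ≤ w₁ + w₂) : v - v ⊓ w₁ ≤ w₂ := by
  rw [sub_inf, sub_self]
  exact sup_le hw₂ (sub_le_iff_le_add'.mpr h)

lemma posPart_le_abs (x : G) : x⁺ ≤ |x| :=
  (le_add_of_nonneg_right (negPart_nonneg x)).trans_eq (posPart_add_negPart x)

lemma negPart_le_abs (x : G) : x⁻ ≤ |x| :=
  (le_add_of_nonneg_left (posPart_nonneg x)).trans_eq (posPart_add_negPart x)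

lemma abs_le_inf_posPart_add_inf_negPart {x y : G} (h : |y| ≤ |x|) :
    |y| ≤ |y| ⊓ x⁺ + |y| ⊓ x⁻ :=
  calc |y| = |y| ⊓ (x⁺ + x⁻) := by rw [posPart_add_negPart, inf_eq_left.mpr h]
    _ ≤ |y| ⊓ x⁺ + |y| ⊓ x⁻ :=
      inf_add_le_inf_add_inf (abs_nonneg y) (posPart_nonneg x) (negPart_nonneg x)

end LatticeOrderedGroup

section NormedLattice

variable {G : Type*} [NormedAddCommGroup G] [Lattice G] [HasSolidNorm G] [IsOrderedAddMonoid G]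

lemma norm_le_norm_of_nonneg_of_le {v w : G} (hv : 0 ≤ v) (h : v ≤ w) : ‖v‖ ≤ ‖w‖ :=
  norm_le_norm_of_abs_le_abs (by rwa [abs_of_nonneg hv, abs_of_nonneg (hv.trans h)])

lemma exists_le_posPart_or_negPart_of_abs_le {x y : G} (h : |y| ≤ |x|) :
    ∃ z, 0 ≤ z ∧ z ≤ |y| ∧ (z ≤ x⁺ ∨ z ≤ x⁻) ∧ ‖y‖ ≤ 2 * ‖z‖ := by
  set p := |y| ⊓ x⁺
  set q := |y| ⊓ x⁻
  have hp : 0 ≤ p := le_inf (abs_nonneg y) (posPart_nonneg x)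
  have hq : 0 ≤ q := le_inf (abs_nonneg y) (negPart_nonneg x)
  have hy : ‖y‖ ≤ ‖p‖ + ‖q‖ :=
    calc ‖y‖ = ‖|y|‖ := (norm_abs_eq_norm y).symm
      _ ≤ ‖p + q‖ :=
        norm_le_norm_of_nonneg_of_le (abs_nonneg y) (abs_le_inf_posPart_add_inf_negPart h)
      _ ≤ ‖p‖ + ‖q‖ := norm_add_le p q
  rcases le_total ‖q‖ ‖p‖ with hqp | hpq
  · exact ⟨p, hp, inf_le_left, Or.inl inf_le_right, by linarith⟩
  · exact ⟨q, hq, inf_le_left, Or.inr inf_le_right, by linarith⟩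

lemma IsLwcSet.tendsto_iSup_norm_inf_nsmul {w : G} (hw : IsLwcSet {w}) (hw₀ : 0 ≤ w)
    {z : ℕ → G} (hz : ∀ n, 0 ≤ z n) (hdisj : ∀ n m, n ≠ m → z n ⊓ z m = 0) :
    Tendsto (fun n => ⨆ k : ℕ, ‖w ⊓ k • z n‖) atTop (𝓝 0) := by
  have hnonneg : ∀ n (k : ℕ), 0 ≤ w ⊓ k • z n := fun n k => le_inf hw₀ (nsmul_nonneg (hz n) k)
  choose k hk using fun n : ℕ =>
    exists_lt_of_lt_ciSup (sub_lt_self (⨆ k : ℕ, ‖w ⊓ k • z n‖) (Nat.one_div_pos_of_nat (n := n)))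
  have hnull : Tendsto (fun n => ‖w ⊓ k n • z n‖) atTop (𝓝 0) := by
    refine hw.2 _ (fun n => ⟨w, rfl, ?_⟩) (fun n m hnm => ?_)
    · rw [abs_of_nonneg (hnonneg n _), abs_of_nonneg hw₀]
      exact inf_le_left
    · rw [abs_of_nonneg (hnonneg n _), abs_of_nonneg (hnonneg m _)]
      refine le_antisymm ?_ (le_inf (hnonneg n _) (hnonneg m _))
      exact (inf_le_inf inf_le_right inf_le_right).trans_eq
        (nsmul_inf_nsmul_eq_zero (hz n) (hz m) (hdisj n m hnm) _ _)
  refine squeeze_zero (fun n => Real.iSup_nonneg fun k => norm_nonneg _)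
    (fun n => (sub_le_iff_le_add.mp (hk n).le)) ?_
  simpa using hnull.add tendsto_one_div_add_atTop_nhds_zero_nat

end NormedLattice

section IdealPosPart

variable {G : Type*} [NormedAddCommGroup G] [Lattice G] [HasSolidNorm G] [IsOrderedAddMonoid G]
  [NormedSpace ℝ G]

/-- The Riesz–Kantorovich formula for the positive part of `g` restricted to the ideal generated
by `z`, evaluated at `w ≥ 0`. -/
noncomputable def idealPosPart (g : G →L[ℝ] ℝ) (z w : G) : ℝ := sSup (g '' idealIcc z w)

variable (g : G →L[ℝ] ℝ) {z w w₁ w₂ : G}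

lemma apply_le_of_mem_idealIcc {v : G} (hv : v ∈ idealIcc z w) : g v ≤ ‖g‖ * ‖w‖ :=
  calc g v ≤ ‖g v‖ := Real.le_norm_self _
    _ ≤ ‖g‖ * ‖v‖ := g.le_opNorm v
    _ ≤ ‖g‖ * ‖w‖ := by gcongr; exact norm_le_norm_of_nonneg_of_le hv.1 hv.2.1

lemma bddAbove_image_idealIcc : BddAbove (g '' idealIcc z w) :=
  ⟨‖g‖ * ‖w‖, by rintro _ ⟨v, hv, rfl⟩; exact apply_le_of_mem_idealIcc g hv⟩

lemma le_idealPosPart {v : G} (hv : v ∈ idealIcc z w) : g v ≤ idealPosPart g z w :=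
  le_csSup (bddAbove_image_idealIcc g) ⟨v, hv, rfl⟩

lemma idealPosPart_nonneg (hw : 0 ≤ w) : 0 ≤ idealPosPart g z w := by
  simpa using le_idealPosPart g (zero_mem_idealIcc hw)

lemma idealPosPart_le (hw : 0 ≤ w) : idealPosPart g z w ≤ ‖g‖ * ‖w‖ :=
  csSup_le ⟨_, Set.mem_image_of_mem g (zero_mem_idealIcc hw)⟩ <| by
    rintro _ ⟨v, hv, rfl⟩; exact apply_le_of_mem_idealIcc g hv

lemma idealPosPart_add (hw₁ : 0 ≤ w₁) (hw₂ : 0 ≤ w₂) :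
    idealPosPart g z (w₁ + w₂) = idealPosPart g z w₁ + idealPosPart g z w₂ := by
  have hne : ∀ {w : G}, 0 ≤ w → (g '' idealIcc z w).Nonempty := fun hw =>
    ⟨_, Set.mem_image_of_mem g (zero_mem_idealIcc hw)⟩
  refine le_antisymm (csSup_le (hne (add_nonneg hw₁ hw₂)) ?_) ?_
  · rintro _ ⟨v, ⟨hv, hvw, k, hvk⟩, rfl⟩
    -- Riesz decomposition of `v` along `w₁ + w₂`.
    have hp : v ⊓ w₁ ∈ idealIcc z w₁ :=
      ⟨le_inf hv hw₁, inf_le_right, k, inf_le_left.trans hvk⟩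
    have hq : v - v ⊓ w₁ ∈ idealIcc z w₂ :=
      ⟨sub_nonneg.mpr inf_le_left, sub_inf_le_of_le_add_s15 hw₂ hvw, k,
        (sub_le_self v (le_inf hv hw₁)).trans hvk⟩
    calc g v = g (v ⊓ w₁) + g (v - v ⊓ w₁) := by rw [← map_add, add_sub_cancel]
      _ ≤ _ := add_le_add (le_idealPosPart g hp) (le_idealPosPart g hq)
  · rw [idealPosPart, idealPosPart, ← csSup_add (hne hw₁) (bddAbove_image_idealIcc g)
      (hne hw₂) (bddAbove_image_idealIcc g)]
    refine csSup_le_csSup (bddAbove_image_idealIcc g) ((hne hw₁).add (hne hw₂)) ?_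
    rintro _ ⟨_, ⟨v₁, ⟨hv₁, hvw₁, k₁, hvk₁⟩, rfl⟩, _, ⟨v₂, ⟨hv₂, hvw₂, k₂, hvk₂⟩, rfl⟩, rfl⟩
    refine ⟨v₁ + v₂, ⟨add_nonneg hv₁ hv₂, add_le_add hvw₁ hvw₂, k₁ + k₂, ?_⟩, map_add g v₁ v₂⟩
    rw [add_nsmul]
    exact add_le_add hvk₁ hvk₂

lemma idealPosPart_eq_zero_of_inf_eq_zero (hz : 0 ≤ z) (hw : 0 ≤ w) (h : w ⊓ z = 0) :
    idealPosPart g z w = 0 := by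
  refine le_antisymm (csSup_le ⟨_, Set.mem_image_of_mem g (zero_mem_idealIcc hw)⟩ ?_)
    (idealPosPart_nonneg g hw)
  rintro _ ⟨v, ⟨hv, hvw, k, hvk⟩, rfl⟩
  have : v = 0 := le_antisymm ((le_inf hvw hvk).trans_eq (inf_nsmul_eq_zero hw hz h k)) hv
  simp [this]

lemma idealPosPart_le_iSup (hg : ‖g‖ ≤ 1) (hz : 0 ≤ z) (hw : 0 ≤ w) (hww₁ : w ≤ w₁) :
    idealPosPart g z w ≤ ⨆ k : ℕ, ‖w₁ ⊓ k • z‖ := by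
  have hnonneg : ∀ k : ℕ, 0 ≤ w₁ ⊓ k • z := fun k => le_inf (hw.trans hww₁) (nsmul_nonneg hz k)
  have hbdd : BddAbove (Set.range fun k : ℕ => ‖w₁ ⊓ k • z‖) :=
    ⟨‖w₁‖, by rintro _ ⟨k, rfl⟩; exact norm_le_norm_of_nonneg_of_le (hnonneg k) inf_le_left⟩
  refine csSup_le ⟨_, Set.mem_image_of_mem g (zero_mem_idealIcc hw)⟩ ?_
  rintro _ ⟨v, ⟨hv, hvw, k, hvk⟩, rfl⟩
  calc g v ≤ ‖g‖ * ‖v‖ := (Real.le_norm_self _).trans (g.le_opNorm v)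
    _ ≤ ‖v‖ := mul_le_of_le_one_left (norm_nonneg v) hg
    _ ≤ ‖w₁ ⊓ k • z‖ := norm_le_norm_of_nonneg_of_le hv (le_inf (hvw.trans hww₁) hvk)
    _ ≤ _ := le_ciSup hbdd k

lemma idealPosPart_posPart_sub_negPart_add (x y : G) :
    idealPosPart g z (x + y)⁺ - idealPosPart g z (x + y)⁻
      = idealPosPart g z x⁺ - idealPosPart g z x⁻
        + (idealPosPart g z y⁺ - idealPosPart g z y⁻) := by
  -- Both sides of `(x + y)⁺ + (x⁻ + y⁻) = (x + y)⁻ + (x⁺ + y⁺)` are sums of positive elements.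
  have key : (x + y)⁺ + (x⁻ + y⁻) = (x + y)⁻ + (x⁺ + y⁺) := by
    have hpos : ∀ u : G, u⁺ = u + u⁻ := fun u => sub_eq_iff_eq_add.mp (posPart_sub_negPart u)
    rw [hpos (x + y), hpos x, hpos y]
    abel
  have h := congrArg (idealPosPart g z) key
  rw [idealPosPart_add g (posPart_nonneg _) (add_nonneg (negPart_nonneg _) (negPart_nonneg _)),
    idealPosPart_add g (negPart_nonneg _) (negPart_nonneg _),
    idealPosPart_add g (negPart_nonneg _) (add_nonneg (posPart_nonneg _) (posPart_nonneg _)),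
    idealPosPart_add g (posPart_nonneg _) (posPart_nonneg _)] at h
  linarith

lemma abs_idealPosPart_posPart_sub_negPart_le (x : G) :
    |idealPosPart g z x⁺ - idealPosPart g z x⁻| ≤ ‖g‖ * ‖x‖ := by
  have hx : ∀ {v : G}, 0 ≤ v → v ≤ |x| → idealPosPart g z v ≤ ‖g‖ * ‖x‖ := fun hv hvx =>
    (idealPosPart_le g hv).trans (mul_le_mul_of_nonneg_left
      ((norm_le_norm_of_nonneg_of_le hv hvx).trans_eq (norm_abs_eq_norm x)) (norm_nonneg g))
  exact abs_sub_le_of_nonneg_of_le (idealPosPart_nonneg g (posPart_nonneg x))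
    (hx (posPart_nonneg x) (posPart_le_abs x)) (idealPosPart_nonneg g (negPart_nonneg x))
    (hx (negPart_nonneg x) (negPart_le_abs x))

noncomputable def idealPosPartCLM (z : G) : G →L[ℝ] ℝ :=
  let ψ : G →+ ℝ := AddMonoidHom.mk' (fun x => idealPosPart g z x⁺ - idealPosPart g z x⁻)
    (idealPosPart_posPart_sub_negPart_add g)
  ψ.toRealLinearMap <|
    AddMonoidHomClass.continuous_of_bound ψ ‖g‖ (abs_idealPosPart_posPart_sub_negPart_le g)

lemma idealPosPartCLM_apply (x : G) :
    idealPosPartCLM g z x = idealPosPart g z x⁺ - idealPosPart g z x⁻ := rfl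

lemma abs_idealPosPartCLM_le (hg : ‖g‖ ≤ 1) (hz : 0 ≤ z) {x : G} (hxw : |x| ≤ w) :
    |idealPosPartCLM g z x| ≤ ⨆ k : ℕ, ‖w ⊓ k • z‖ := by
  rw [idealPosPartCLM_apply]
  refine abs_sub_le_of_nonneg_of_le (idealPosPart_nonneg g (posPart_nonneg x)) ?_
    (idealPosPart_nonneg g (negPart_nonneg x)) ?_
  · exact idealPosPart_le_iSup g hg hz (posPart_nonneg x) ((posPart_le_abs x).trans hxw)
  · exact idealPosPart_le_iSup g hg hz (negPart_nonneg x) ((negPart_le_abs x).trans hxw)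

lemma norm_le_idealPosPartCLM (hz : 0 ≤ z) (hgz : g z = ‖z‖) {x : G} (hzx : z ≤ x⁺) :
    ‖z‖ ≤ idealPosPartCLM g z x := by
  have hdisj : x⁻ ⊓ z = 0 :=
    le_antisymm ((inf_le_inf_left _ hzx).trans_eq (by rw [inf_comm, posPart_inf_negPart_eq_zero]))
      (le_inf (negPart_nonneg x) hz)
  rw [idealPosPartCLM_apply, idealPosPart_eq_zero_of_inf_eq_zero g hz (negPart_nonneg x) hdisj,
    sub_zero, ← hgz]
  exact le_idealPosPart g ⟨hz, hzx, 1, by rw [one_nsmul]⟩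

lemma norm_le_abs_idealPosPartCLM (hz : 0 ≤ z) (hgz : g z = ‖z‖) {x : G}
    (hzx : z ≤ x⁺ ∨ z ≤ x⁻) : ‖z‖ ≤ |idealPosPartCLM g z x| := by
  rcases hzx with hzx | hzx
  · exact (norm_le_idealPosPartCLM g hz hgz hzx).trans (le_abs_self _)
  · rw [← posPart_neg] at hzx
    calc ‖z‖ ≤ idealPosPartCLM g z (-x) := norm_le_idealPosPartCLM g hz hgz hzx
      _ = -idealPosPartCLM g z x := map_neg _ x
      _ ≤ |idealPosPartCLM g z x| := neg_le_abs _

end IdealPosPart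

lemma isLimitedSet_singleton {X : Type*} [NormedAddCommGroup X] [NormedSpace ℝ X] (x : X) :
    IsLimitedSet ({x} : Set X) := by
  refine ⟨Bornology.isBounded_singleton, fun f hf ε hε => ?_⟩
  obtain ⟨N, hN⟩ := Metric.tendsto_atTop.mp (hf x) ε hε
  refine ⟨N, fun n hn a ha => ?_⟩
  rw [Set.mem_singleton_iff.mp ha]
  simpa [Real.dist_eq] using (hN n hn).le

lemma UnifNullOn.tendsto_apply {X : Type*} [NormedAddCommGroup X] [NormedSpace ℝ X]
    {f : ℕ → X →L[ℝ] ℝ} {A : Set X} (hf : UnifNullOn f A) {a : ℕ → X} (ha : ∀ n, a n ∈ A) :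
    Tendsto (fun n => f n (a n)) atTop (𝓝 0) := by
  refine Metric.tendsto_atTop.mpr fun ε hε => ?_
  obtain ⟨N, hN⟩ := hf (ε / 2) (half_pos hε)
  exact ⟨N, fun n hn => by simpa [Real.dist_eq] using (hN n hn _ (ha n)).trans_lt (half_lt_self hε)⟩

section Domination

variable {E : Type*} [NormedAddCommGroup E] [Lattice E] [HasSolidNorm E] [IsOrderedAddMonoid E]
  [NormedSpace ℝ E]
  {F : Type*} [NormedAddCommGroup F] [Lattice F] [HasSolidNorm F] [IsOrderedAddMonoid F]
  [NormedSpace ℝ F]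
  {S T : E →L[ℝ] F}

lemma OpLE.apply_le (h : OpLE S T) {e : E} (he : 0 ≤ e) : S e ≤ T e :=
  sub_nonneg.mp (by simpa using h e he)

lemma abs_apply_le_apply_abs (h₁ : OpLE S T) (h₂ : OpLE (-S) T) (e : E) : |S e| ≤ T |e| := by
  have hp₁ := h₁.apply_le (posPart_nonneg e)
  have hn₁ := h₁.apply_le (negPart_nonneg e)
  have hp₂ := h₂.apply_le (posPart_nonneg e)
  have hn₂ := h₂.apply_le (negPart_nonneg e)
  rw [neg_apply] at hp₂ hn₂
  rw [← posPart_add_negPart e, map_add]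
  conv_lhs => rw [← posPart_sub_negPart e, map_sub]
  refine abs_le'.mpr ⟨?_, ?_⟩
  · calc S e⁺ - S e⁻ = S e⁺ + -S e⁻ := sub_eq_add_neg _ _
      _ ≤ T e⁺ + T e⁻ := add_le_add hp₁ hn₂
  · calc -(S e⁺ - S e⁻) = -S e⁺ + S e⁻ := by abel
      _ ≤ T e⁺ + T e⁻ := add_le_add hp₂ hn₁

end Domination

theorem lLwc_domination_general
    {E : Type*} [NormedAddCommGroup E] [Lattice E] [HasSolidNorm E] [IsOrderedAddMonoid E] [NormedSpace ℝ E]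
    {F : Type*} [NormedAddCommGroup F] [Lattice F] [HasSolidNorm F] [IsOrderedAddMonoid F] [NormedSpace ℝ F]
    (S T : E →L[ℝ] F) (h₁ : OpLE S T) (h₂ : OpLE (-S) T)
    (hT : ∀ A : Set E, IsLimitedSet A → IsLwcSet (T '' A)) :
    ∀ A : Set E, IsLimitedSet A → IsLwcSet (S '' A) := by
  intro A hA
  refine ⟨S.lipschitz.isBounded_image hA.1, fun x hx hdisj => ?_⟩
  have hxS : ∀ n, ∃ a ∈ A, |x n| ≤ |S a| := fun n => by
    obtain ⟨_, ⟨a, ha, rfl⟩, h⟩ := hx n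
    exact ⟨a, ha, h⟩
  choose a haA hxa using hxS
  choose z hz₀ hzx hzS hxz using fun n => exists_le_posPart_or_negPart_of_abs_le (hxa n)
  choose g hg hgz using fun n => exists_dual_vector'' ℝ (z n)
  have hzdisj : ∀ n m, n ≠ m → z n ⊓ z m = 0 := fun n m hnm =>
    le_antisymm ((inf_le_inf (hzx n) (hzx m)).trans_eq (hdisj n m hnm)) (le_inf (hz₀ n) (hz₀ m))
  let Φ : ℕ → E →L[ℝ] ℝ := fun n => (idealPosPartCLM (g n) (z n)).comp S
  have hΦ : ∀ e, Tendsto (fun n => Φ n e) atTop (𝓝 0) := fun e =>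
    have hSe := abs_apply_le_apply_abs h₁ h₂ e
    have hLwc : IsLwcSet {T |e|} := by simpa using hT _ (isLimitedSet_singleton |e|)
    squeeze_zero_norm (fun n => abs_idealPosPartCLM_le (g n) (hg n) (hz₀ n) hSe)
      (hLwc.tendsto_iSup_norm_inf_nsmul ((abs_nonneg _).trans hSe) hz₀ hzdisj)
  have hΦa := (hA.2 Φ hΦ).tendsto_apply haA
  refine squeeze_zero (fun n => norm_nonneg _) (fun n => (hxz n).trans ?_)
    (by simpa using hΦa.abs.const_mul 2)
  exact mul_le_mul_of_nonneg_left (norm_le_abs_idealPosPartCLM (g n) (hz₀ n) (hgz n) (hzS n))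
    zero_le_two

/-- Domination for limitedly L-weakly compact operators: if `±S ≤ T` and `T` is l-Lwc,
then `S` is l-Lwc. -/
theorem lLwc_domination
    {E : Type*} [NormedAddCommGroup E] [Lattice E] [HasSolidNorm E] [IsOrderedAddMonoid E] [NormedSpace ℝ E] [CompleteSpace E]
    {F : Type*} [NormedAddCommGroup F] [Lattice F] [HasSolidNorm F] [IsOrderedAddMonoid F] [NormedSpace ℝ F] [CompleteSpace F]
    (S T : E →L[ℝ] F) (h₁ : OpLE S T) (h₂ : OpLE (-S) T)
    (hT : ∀ A : Set E, IsLimitedSet A → IsLwcSet (T '' A)) :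
    ∀ A : Set E, IsLimitedSet A → IsLwcSet (S '' A) :=
  lLwc_domination_general S T h₁ h₂ hT
end

section
/- Let E and F be Banach lattices and let S, T : E → F be bounded linear operators with ±S ≤ T (i.e. S ≤ T and −S ≤ T in the operator order). If T is limitedly M-weakly compact, then S is limitedly M-weakly compact. -/
/-!
For a functional `g` on `F`, the modulus `|g| = g⁺ + g⁻` is again a bounded functional, where
`g⁺ y = sup g([0, y])` for `y ≥ 0` (Riesz–Kantorovich); it satisfies `|g w| ≤ |g| z` whenever
`|w| ≤ z`. Since `±S ≤ T` gives `|S x| ≤ T |x|`, we get `|g (S xₙ)| ≤ |g| (T |xₙ|)`, and the right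
side tends to zero because `(|xₙ|)` is again disjoint and bounded and `T` is l-Mwc.
-/

open Filter Topology

open Set
open scoped Pointwise

section LatticeOrderedGroup

variable {α : Type*} [Lattice α] [AddCommGroup α] [IsOrderedAddMonoid α]

lemma posPart_le_abs_s16 (a : α) : a⁺ ≤ |a| := by
  rw [posPart_def]
  exact sup_le (le_abs_self a) (abs_nonneg a)

lemma negPart_le_abs_s16 (a : α) : a⁻ ≤ |a| := by
  rw [negPart_def]
  exact sup_le (neg_le_abs a) (abs_nonneg a)

/-- The Riesz decomposition property. -/
lemma Icc_zero_add_Icc_zero {a b : α} (ha : 0 ≤ a) (hb : 0 ≤ b) :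
    Icc 0 a + Icc 0 b = Icc 0 (a + b) := by
  refine subset_antisymm (by simpa using Icc_add_Icc_subset 0 a 0 b) ?_
  rintro z ⟨hz, hzab⟩
  refine ⟨z ⊓ a, ⟨le_inf hz ha, inf_le_right⟩, z - z ⊓ a, ⟨?_, ?_⟩, add_sub_cancel _ _⟩
  · exact sub_nonneg.2 inf_le_left
  · rw [sub_inf, sub_self]
    exact sup_le hb (sub_le_iff_le_add'.2 hzab)

lemma map_posPart_sub_map_negPart_add {φ : α → ℝ}
    (hφ : ∀ a b, 0 ≤ a → 0 ≤ b → φ (a + b) = φ a + φ b) (y w : α) :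
    φ (y + w)⁺ - φ (y + w)⁻ = (φ y⁺ - φ y⁻) + (φ w⁺ - φ w⁻) := by
  have hsplit : (y + w)⁺ + (y⁻ + w⁻) = (y⁺ + w⁺) + (y + w)⁻ := by
    rw [← sub_eq_sub_iff_add_eq_add, posPart_sub_negPart]
    conv_lhs => rw [← posPart_sub_negPart y, ← posPart_sub_negPart w]
    abel
  have key := congrArg φ hsplit
  rw [hφ _ _ (posPart_nonneg _) (add_nonneg (negPart_nonneg _) (negPart_nonneg _)),
    hφ _ _ (add_nonneg (posPart_nonneg _) (posPart_nonneg _)) (negPart_nonneg _),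
    hφ _ _ (posPart_nonneg _) (posPart_nonneg _),
    hφ _ _ (negPart_nonneg _) (negPart_nonneg _)] at key
  linarith

end LatticeOrderedGroup

section SolidNorm

variable {F : Type*} [NormedAddCommGroup F] [Lattice F] [HasSolidNorm F] [IsOrderedAddMonoid F]

lemma norm_le_norm_of_nonneg_of_le_abs {z y : F} (hz : 0 ≤ z) (h : z ≤ |y|) : ‖z‖ ≤ ‖y‖ :=
  HasSolidNorm.solid (by rwa [abs_of_nonneg hz])

lemma isBounded_range_abs {ι : Type*} {x : ι → F} (hx : Bornology.IsBounded (range x)) :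
    Bornology.IsBounded (range fun n => |x n|) := by
  obtain ⟨C, hC⟩ := isBounded_iff_forall_norm_le.1 hx
  refine isBounded_iff_forall_norm_le.2 ⟨C, ?_⟩
  rintro _ ⟨n, rfl⟩
  rw [norm_abs_eq_norm]
  exact hC _ ⟨n, rfl⟩

end SolidNorm

section DualModulus

variable {F : Type*} [NormedAddCommGroup F] [Lattice F] [HasSolidNorm F]
    [IsOrderedAddMonoid F] [NormedSpace ℝ F]

/-- For `y ≥ 0` this is the Riesz–Kantorovich formula for `g⁺ y`. -/
noncomputable def supIcc (g : F →L[ℝ] ℝ) (y : F) : ℝ := sSup (g '' Icc 0 y)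

variable (g : F →L[ℝ] ℝ)

lemma apply_le_norm_mul_of_le_abs {u y : F} (hu : 0 ≤ u) (h : u ≤ |y|) : g u ≤ ‖g‖ * ‖y‖ :=
  calc g u ≤ ‖g‖ * ‖u‖ := (le_abs_self _).trans (g.le_opNorm u)
    _ ≤ ‖g‖ * ‖y‖ := by gcongr; exact norm_le_norm_of_nonneg_of_le_abs hu h

lemma image_Icc_bddAbove (y : F) : BddAbove (g '' Icc 0 y) := by
  refine ⟨‖g‖ * ‖y‖, ?_⟩
  rintro _ ⟨u, ⟨hu, huy⟩, rfl⟩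
  exact apply_le_norm_mul_of_le_abs g hu (huy.trans (le_abs_self y))

lemma le_supIcc {u y : F} (hu : 0 ≤ u) (huy : u ≤ y) : g u ≤ supIcc g y :=
  le_csSup (image_Icc_bddAbove g y) ⟨u, ⟨hu, huy⟩, rfl⟩

lemma supIcc_nonneg {y : F} (hy : 0 ≤ y) : 0 ≤ supIcc g y := by
  simpa using le_supIcc g le_rfl hy

lemma supIcc_le_norm_mul_of_le_abs {z y : F} (hz : 0 ≤ z) (h : z ≤ |y|) :
    supIcc g z ≤ ‖g‖ * ‖y‖ := by
  refine csSup_le ((nonempty_Icc.2 hz).image g) ?_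
  rintro _ ⟨u, ⟨hu, huz⟩, rfl⟩
  exact apply_le_norm_mul_of_le_abs g hu (huz.trans h)

lemma supIcc_add {a b : F} (ha : 0 ≤ a) (hb : 0 ≤ b) :
    supIcc g (a + b) = supIcc g a + supIcc g b := by
  rw [supIcc, ← Icc_zero_add_Icc_zero ha hb, image_add,
    csSup_add ((nonempty_Icc.2 ha).image g) (image_Icc_bddAbove g a)
      ((nonempty_Icc.2 hb).image g) (image_Icc_bddAbove g b), supIcc, supIcc]

noncomputable def dualPosPart : F →L[ℝ] ℝ :=
  let f : F →+ ℝ := AddMonoidHom.mk' (fun y => supIcc g y⁺ - supIcc g y⁻)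
    (map_posPart_sub_map_negPart_add fun _ _ => supIcc_add g)
  f.toRealLinearMap <| AddMonoidHomClass.continuous_of_bound f ‖g‖ fun y =>
    abs_sub_le_of_nonneg_of_le (supIcc_nonneg g (posPart_nonneg y))
      (supIcc_le_norm_mul_of_le_abs g (posPart_nonneg y) (posPart_le_abs_s16 y))
      (supIcc_nonneg g (negPart_nonneg y))
      (supIcc_le_norm_mul_of_le_abs g (negPart_nonneg y) (negPart_le_abs_s16 y))

lemma dualPosPart_apply_of_nonneg {y : F} (hy : 0 ≤ y) : dualPosPart g y = supIcc g y := by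
  have hzero : supIcc g 0 = 0 := by simpa using supIcc_add g le_rfl le_rfl
  change supIcc g y⁺ - supIcc g y⁻ = supIcc g y
  rw [posPart_eq_self.2 hy, negPart_eq_zero.2 hy, hzero, sub_zero]

lemma dualPosPart_nonneg {y : F} (hy : 0 ≤ y) : 0 ≤ dualPosPart g y := by
  rw [dualPosPart_apply_of_nonneg g hy]
  exact supIcc_nonneg g hy

lemma apply_le_dualPosPart {y : F} (hy : 0 ≤ y) : g y ≤ dualPosPart g y := by
  rw [dualPosPart_apply_of_nonneg g hy]
  exact le_supIcc g hy le_rfl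

/-- The modulus `|g| = g⁺ + g⁻`, where `g⁻ = g⁺ - g`. -/
noncomputable def dualAbs : F →L[ℝ] ℝ := (2 : ℝ) • dualPosPart g - g

lemma apply_le_dualAbs {w z : F} (h : |w| ≤ z) : g w ≤ dualAbs g z := by
  have hpos : w⁺ ≤ z := (posPart_le_abs_s16 w).trans h
  have hneg : w⁻ ≤ z := (negPart_le_abs_s16 w).trans h
  -- `g w ≤ g⁺ w⁺ + g⁻ w⁻ ≤ g⁺ z + g⁻ z`, using positivity of `g⁺` and `g⁻`
  have h₁ := apply_le_dualPosPart g (posPart_nonneg w)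
  have h₂ := dualPosPart_nonneg g (negPart_nonneg w)
  have h₃ := dualPosPart_nonneg g (sub_nonneg.2 hpos)
  have h₄ := apply_le_dualPosPart g (sub_nonneg.2 hneg)
  have hw : g w = g w⁺ - g w⁻ := by rw [← map_sub, posPart_sub_negPart]
  simp only [map_sub] at h₃ h₄
  simp only [dualAbs, sub_apply, smul_apply, smul_eq_mul]
  linarith

lemma abs_apply_le_dualAbs {w z : F} (h : |w| ≤ z) : |g w| ≤ dualAbs g z := by
  have hneg := apply_le_dualAbs g (by rwa [abs_neg] : |-w| ≤ z)
  rw [map_neg] at hneg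
  exact abs_le.2 ⟨by linarith, apply_le_dualAbs g h⟩

end DualModulus

section Domination

variable {E : Type*} [NormedAddCommGroup E] [Lattice E] [HasSolidNorm E]
    [IsOrderedAddMonoid E] [NormedSpace ℝ E]
    {F : Type*} [NormedAddCommGroup F] [Lattice F] [HasSolidNorm F]
    [IsOrderedAddMonoid F] [NormedSpace ℝ F] {S T : E →L[ℝ] F}

lemma abs_apply_le_of_nonneg_of_opLE (h₁ : OpLE S T) (h₂ : OpLE (-S) T) {y : E}
    (hy : 0 ≤ y) : |S y| ≤ T y := by
  have hle := h₁ y hy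
  have hge := h₂ y hy
  simp only [sub_neg_eq_add, sub_apply, add_apply] at hle hge
  exact abs_le'.2 ⟨sub_nonneg.1 hle, by rwa [neg_le_iff_add_nonneg]⟩

lemma abs_apply_le_apply_abs_of_opLE (h₁ : OpLE S T) (h₂ : OpLE (-S) T) (x : E) :
    |S x| ≤ T |x| :=
  calc |S x| = |S x⁺ + -S x⁻| := by rw [← sub_eq_add_neg, ← map_sub, posPart_sub_negPart]
    _ ≤ |S x⁺| + |S x⁻| := by rw [← abs_neg (S x⁻)]; exact abs_add_le _ _
    _ ≤ T x⁺ + T x⁻ := add_le_add (abs_apply_le_of_nonneg_of_opLE h₁ h₂ (posPart_nonneg x))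
      (abs_apply_le_of_nonneg_of_opLE h₁ h₂ (negPart_nonneg x))
    _ = T |x| := by rw [← map_add, posPart_add_negPart]

end Domination

theorem lMwc_domination_general
    {E : Type*} [NormedAddCommGroup E] [Lattice E] [HasSolidNorm E]
    [IsOrderedAddMonoid E] [NormedSpace ℝ E]
    {F : Type*} [NormedAddCommGroup F] [Lattice F] [HasSolidNorm F]
    [IsOrderedAddMonoid F] [NormedSpace ℝ F]
    (S T : E →L[ℝ] F) (h₁ : OpLE S T) (h₂ : OpLE (-S) T)
    (hT : IsLMwcOp T) :
    IsLMwcOp S := by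
  intro x hx hdisj g
  have hTabs : Tendsto (fun n => dualAbs g (T |x n|)) atTop (𝓝 0) :=
    hT _ (isBounded_range_abs hx) (by simpa only [abs_abs] using hdisj) (dualAbs g)
  exact squeeze_zero_norm
    (fun n => abs_apply_le_dualAbs g (abs_apply_le_apply_abs_of_opLE h₁ h₂ (x n))) hTabs

/-- Domination for limitedly M-weakly compact operators: if `±S ≤ T` and `T` is l-Mwc,
then `S` is l-Mwc. -/
theorem lMwc_domination
    {E : Type*} [NormedAddCommGroup E] [Lattice E] [HasSolidNorm E]
    [IsOrderedAddMonoid E] [NormedSpace ℝ E] [CompleteSpace E]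
    {F : Type*} [NormedAddCommGroup F] [Lattice F] [HasSolidNorm F]
    [IsOrderedAddMonoid F] [NormedSpace ℝ F] [CompleteSpace F]
    (S T : E →L[ℝ] F) (h₁ : OpLE S T) (h₂ : OpLE (-S) T)
    (hT : IsLMwcOp T) :
    IsLMwcOp S :=
  lMwc_domination_general S T h₁ h₂ hT
end
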